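/- arXiv:2404.06123 — 3 statements merged into one kernel-verified Lean document; each statement's English description precedes it below -/
import Mathlib

section
/- Let (Λ, ⪯) be a finite poset of forest type and Θ ⊆ Λ a stable subset. Define m*(Λ,Θ) ⊆ Λ \ Θ as in the definition: j ∈ m*(Λ,Θ) iff j ∈ Λ \ Θ and either there is no j' ∈ Λ \ Θ with j ≺ j', or there exists i ∈ Θ with j ≺ i and no j' ∈ Λ \ Θ with j ≺ j' ≺ i. Then for every j ∈ Θ, there exists k ∈ m*(Λ,Θ) with k ⪯ j. -/
theorem exists_le_notMem_of_forall_mem_exists_lt {α : Type*} [Preorder α] [WellFoundedLT α]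
    {Θ : Set α} (hΘ : ∀ i ∈ Θ, ∃ j, j < i) (j : α) : ∃ k ≤ j, k ∉ Θ := by
  induction j using WellFoundedLT.induction with
  | ind j ih =>
    by_cases hj : j ∈ Θ
    · obtain ⟨i, hij⟩ := hΘ j hj
      obtain ⟨k, hki, hk⟩ := ih i hij
      exact ⟨k, hki.trans hij.le, hk⟩
    · exact ⟨j, le_rfl, hj⟩

theorem stmt6_general {Λ : Type*} [PartialOrder Λ] [Fintype Λ]
    (Θ : Set Λ)
    (hstable1 : ∀ i ∈ Θ, ∃ j : Λ, j < i)
    (j : Λ) (hj : j ∈ Θ) :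
    ∃ k : Λ, k ≤ j ∧ k ∉ Θ ∧
      ((¬ ∃ j' : Λ, j' ∉ Θ ∧ k < j') ∨
        (∃ i ∈ Θ, k < i ∧ ¬ ∃ j' : Λ, j' ∉ Θ ∧ k < j' ∧ j' < i)) := by
  -- A maximal element of `{k ≤ j | k ∉ Θ}` has no element outside `Θ` strictly between it and `j`.
  obtain ⟨k₀, hk₀j, hk₀⟩ := exists_le_notMem_of_forall_mem_exists_lt hstable1 j
  obtain ⟨k, -, hkmax⟩ := Finite.exists_le_maximal (p := fun x => x ≤ j ∧ x ∉ Θ) ⟨hk₀j, hk₀⟩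
  obtain ⟨hkj, hkΘ⟩ := hkmax.prop
  have hklt : k < j := hkj.lt_of_ne (by rintro rfl; exact hkΘ hj)
  refine ⟨k, hkj, hkΘ, Or.inr ⟨j, hj, hklt, ?_⟩⟩
  rintro ⟨j', hj'Θ, hkj', hj'j⟩
  exact hkmax.not_gt ⟨hj'j.le, hj'Θ⟩ hkj'

/-- Lemma m-star-2: In a finite poset of forest type with a stable subset
`Θ`, every `j ∈ Θ` lies above some element of `m*(Λ,Θ)`. -/
theorem stmt6 {Λ : Type*} [PartialOrder Λ] [Fintype Λ]
    (hforest : ∀ j i₁ i₂ : Λ, i₁ ≤ j → i₂ ≤ j → i₁ ≤ i₂ ∨ i₂ ≤ i₁)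
    (Θ : Set Λ)
    (hstable1 : ∀ i ∈ Θ, ∃ j : Λ, j < i)
    (hstable2 : ∀ i ∈ Θ, ∀ j : Λ, i ≤ j → j ∈ Θ)
    (j : Λ) (hj : j ∈ Θ) :
    ∃ k : Λ, k ≤ j ∧ k ∉ Θ ∧
      ((¬ ∃ j' : Λ, j' ∉ Θ ∧ k < j') ∨
        (∃ i ∈ Θ, k < i ∧ ¬ ∃ j' : Λ, j' ∉ Θ ∧ k < j' ∧ j' < i)) :=
  stmt6_general Θ hstable1 j hj
end

section
/- Let (Λ, ⪯) be a finite poset of forest type, Θ ⊆ Λ a stable subset, and j ∈ Θ. Let R = {i ∈ Λ \ Θ | i ⪯ j}. Then R is totally ordered by ⪯, and its maximum element belongs to m*(Λ,Θ). -/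
/-!
Below `j` the poset is a chain, so `R` is a finite chain and has a maximum `k` as soon as it is
nonempty. It is nonempty because stability lets one descend from `j` while staying in `Θ`, and
well-foundedness stops the descent at a point outside `Θ`. Since `j ∈ Θ`, we have `k < j`, and
nothing outside `Θ` lies strictly between `k` and `j`, as it would be an element of `R` above `k`.
-/

theorem exists_le_notMem_of_forall_exists_lt {α : Type*} [Preorder α] [WellFoundedLT α]
    {Θ : Set α} (hΘ : ∀ i ∈ Θ, ∃ j, j < i) (j : α) : ∃ i ≤ j, i ∉ Θ := by
  induction j using WellFoundedLT.induction with
  | ind j ih =>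
    by_cases hj : j ∈ Θ
    · obtain ⟨j', hj'⟩ := hΘ j hj
      obtain ⟨i, hij', hi⟩ := ih j' hj'
      exact ⟨i, hij'.trans hj'.le, hi⟩
    · exact ⟨j, le_rfl, hj⟩

theorem IsChain.exists_isGreatest_of_finite {α : Type*} [Preorder α] {s : Set α}
    (hc : IsChain (· ≤ ·) s) (hs : s.Finite) (hne : s.Nonempty) : ∃ k, IsGreatest s k := by
  obtain ⟨k, hk⟩ := hs.exists_maximal hne
  refine ⟨k, hk.prop, fun i hi => ?_⟩
  rcases hc.total hi hk.prop with hik | hki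
  · exact hik
  · exact hk.le_of_ge hi hki

theorem stmt12_general {Λ : Type*} [PartialOrder Λ] [Fintype Λ]
    (hforest : ∀ j i₁ i₂ : Λ, i₁ ≤ j → i₂ ≤ j → i₁ ≤ i₂ ∨ i₂ ≤ i₁)
    (Θ : Set Λ)
    (hstable1 : ∀ i ∈ Θ, ∃ j : Λ, j < i)
    (j : Λ) (hj : j ∈ Θ) :
    (∀ i₁ ∈ {i : Λ | i ∉ Θ ∧ i ≤ j}, ∀ i₂ ∈ {i : Λ | i ∉ Θ ∧ i ≤ j},
        i₁ ≤ i₂ ∨ i₂ ≤ i₁) ∧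
    ∃ k ∈ {i : Λ | i ∉ Θ ∧ i ≤ j},
      (∀ i ∈ {i : Λ | i ∉ Θ ∧ i ≤ j}, i ≤ k) ∧
      (k ∉ Θ ∧
        ((¬ ∃ j' : Λ, j' ∉ Θ ∧ k < j') ∨
          (∃ i ∈ Θ, k < i ∧ ¬ ∃ j' : Λ, j' ∉ Θ ∧ k < j' ∧ j' < i))) := by
  set R := {i : Λ | i ∉ Θ ∧ i ≤ j}
  have hchain : IsChain (· ≤ ·) R := fun i₁ h₁ i₂ h₂ _ => hforest j i₁ i₂ h₁.2 h₂.2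
  have hne : R.Nonempty := by
    obtain ⟨i, hij, hi⟩ := exists_le_notMem_of_forall_exists_lt hstable1 j
    exact ⟨i, hi, hij⟩
  obtain ⟨k, hkR, hkmax⟩ := hchain.exists_isGreatest_of_finite R.toFinite hne
  have hkj : k < j := hkR.2.lt_of_ne fun hkj => hkR.1 (hkj ▸ hj)
  refine ⟨fun i₁ h₁ i₂ h₂ => hchain.total h₁ h₂, k, hkR, fun i hi => hkmax hi, hkR.1,
    Or.inr ⟨j, hj, hkj, ?_⟩⟩
  rintro ⟨j', hj'Θ, hkj', hj'j⟩
  exact (hkmax ⟨hj'Θ, hj'j.le⟩).not_gt hkj'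

/-- For a finite poset of forest type, a stable subset `Θ` and `j ∈ Θ`, the
set `R = {i ∈ Λ \ Θ | i ⪯ j}` is totally ordered and its maximum belongs to `m*(Λ,Θ)`. -/
theorem stmt12 {Λ : Type*} [PartialOrder Λ] [Fintype Λ]
    (hforest : ∀ j i₁ i₂ : Λ, i₁ ≤ j → i₂ ≤ j → i₁ ≤ i₂ ∨ i₂ ≤ i₁)
    (Θ : Set Λ)
    (hstable1 : ∀ i ∈ Θ, ∃ j : Λ, j < i)
    (hstable2 : ∀ i ∈ Θ, ∀ j : Λ, i ≤ j → j ∈ Θ)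
    (j : Λ) (hj : j ∈ Θ) :
    (∀ i₁ ∈ {i : Λ | i ∉ Θ ∧ i ≤ j}, ∀ i₂ ∈ {i : Λ | i ∉ Θ ∧ i ≤ j},
        i₁ ≤ i₂ ∨ i₂ ≤ i₁) ∧
    ∃ k ∈ {i : Λ | i ∉ Θ ∧ i ≤ j},
      (∀ i ∈ {i : Λ | i ∉ Θ ∧ i ≤ j}, i ≤ k) ∧
      (k ∉ Θ ∧
        ((¬ ∃ j' : Λ, j' ∉ Θ ∧ k < j') ∨
          (∃ i ∈ Θ, k < i ∧ ¬ ∃ j' : Λ, j' ∉ Θ ∧ k < j' ∧ j' < i))) :=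
  stmt12_general hforest Θ hstable1 j hj
end

section
/- Let X be a smooth (or real analytic) manifold, Y a smooth manifold, f : X → Y smooth, and L ⊆ Y × Y an embedded submanifold containing the diagonal Δ_Y, locally cut out near a point p ∈ Δ_Y by functions φ_1,...,φ_m with linearly independent differentials, each dφ_i(p) conormal to Δ_Y. Then with f₂ = id_Y × f : Y × X → Y × Y and q ∈ Δ_f (the graph of f, embedded as {(f(x),x)}) with f₂(q) = p, the pullbacks φ_i ∘ f₂ have linearly independent differentials at q, so f₂^{-1}(L) is a submanifold of Y × X near q. -/
/-! The differential of `f₂ = id × f` is `id × df`. A covector `ℓ` on `Y × Y` vanishing on the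
diagonal satisfies `ℓ (v, w) = ℓ (v - w, 0)`, so it is determined by its restriction to `Y × 0`,
which pulling back by `id × df` does not change. Hence pullback is injective on conormal
covectors and preserves linear independence. -/

namespace ContinuousLinearMap

variable {𝕜 : Type*} [NontriviallyNormedField 𝕜]
  {X Y F : Type*} [NormedAddCommGroup X] [NormedSpace 𝕜 X] [NormedAddCommGroup Y]
  [NormedSpace 𝕜 Y] [NormedAddCommGroup F] [NormedSpace 𝕜 F]

theorem eq_zero_of_comp_id_prodMap_eq_zero {ℓ : Y × Y →L[𝕜] F} (hℓ : ∀ v, ℓ (v, v) = 0)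
    {A : X →L[𝕜] Y} (h : ℓ.comp ((ContinuousLinearMap.id 𝕜 Y).prodMap A) = 0) : ℓ = 0 := by
  refine ContinuousLinearMap.ext fun ⟨v, w⟩ => ?_
  have hv : ℓ (v - w, 0) = 0 := by simpa using congr($h (v - w, 0))
  calc ℓ (v, w) = ℓ (v - w, 0) + ℓ (w, w) := by rw [← map_add]; simp
    _ = 0 := by rw [hv, hℓ, add_zero]

theorem _root_.LinearIndependent.comp_id_prodMap_of_conormal {ι : Type*}
    {ℓ : ι → Y × Y →L[𝕜] F} (hℓ : LinearIndependent 𝕜 ℓ) (hconormal : ∀ i v, ℓ i (v, v) = 0)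
    (A : X →L[𝕜] Y) :
    LinearIndependent 𝕜 (fun i => (ℓ i).comp ((ContinuousLinearMap.id 𝕜 Y).prodMap A)) := by
  rw [linearIndependent_iff'] at hℓ ⊢
  intro s c hc
  have hsum : ∀ v, (∑ i ∈ s, c i • ℓ i) (v, v) = 0 := fun v => by simp [hconormal]
  refine hℓ s c (eq_zero_of_comp_id_prodMap_eq_zero (A := A) hsum ?_)
  simpa only [finsetSum_comp, smul_comp] using hc

end ContinuousLinearMap

theorem stmt16_general {X Y : Type*}
    [NormedAddCommGroup X] [NormedSpace ℝ X]
    [NormedAddCommGroup Y] [NormedSpace ℝ Y]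
    (f : X → Y) (x₀ : X) (hf : DifferentiableAt ℝ f x₀)
    {m : ℕ} (φ : Fin m → (Y × Y → ℝ))
    (hindep : LinearIndependent ℝ (fun i => fderiv ℝ (φ i) (f x₀, f x₀)))
    (hconormal : ∀ i, ∀ v : Y, fderiv ℝ (φ i) (f x₀, f x₀) (v, v) = 0) :
    LinearIndependent ℝ
      (fun i => fderiv ℝ ((φ i) ∘ (fun p : Y × X => (p.1, f p.2))) (f x₀, x₀)) := by
  -- `fderiv` is `0` at points of non-differentiability, and independent covectors are nonzero.
  have hφdiff : ∀ i, DifferentiableAt ℝ (φ i) (f x₀, f x₀) := fun i =>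
    not_not.mp fun h => hindep.ne_zero i (fderiv_zero_of_not_differentiableAt h)
  set df₂ := (ContinuousLinearMap.id ℝ Y).prodMap (fderiv ℝ f x₀)
  have hf₂ : HasFDerivAt (Prod.map id f) df₂ (f x₀, x₀) :=
    (hasFDerivAt_id _).prodMap _ hf.hasFDerivAt
  have hchain : ∀ i, fderiv ℝ ((φ i) ∘ (fun p : Y × X => (p.1, f p.2))) (f x₀, x₀) =
      (fderiv ℝ (φ i) (f x₀, f x₀)).comp df₂ := fun i =>
    ((hφdiff i).hasFDerivAt.comp (f x₀, x₀) hf₂).fderiv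
  simp only [hchain]
  exact hindep.comp_id_prodMap_of_conormal hconormal _

/-- Let `f : X → Y` be differentiable at `x₀`, `y₀ = f x₀`,
`p = (y₀, y₀)`, `q = (y₀, x₀)`, and let `φ i : Y × Y → ℝ` be differentiable at `p` with
linearly independent differentials, each conormal to the diagonal (vanishing on tangent
vectors `(v, v)`). Then the pullbacks `φ i ∘ f₂`, with `f₂ (y, x) = (y, f x)`, have
linearly independent differentials at `q`. -/
theorem stmt16 {X Y : Type*}
    [NormedAddCommGroup X] [NormedSpace ℝ X]
    [NormedAddCommGroup Y] [NormedSpace ℝ Y]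
    (f : X → Y) (x₀ : X) (hf : DifferentiableAt ℝ f x₀)
    {m : ℕ} (φ : Fin m → (Y × Y → ℝ))
    (hφdiff : ∀ i, DifferentiableAt ℝ (φ i) (f x₀, f x₀))
    (hindep : LinearIndependent ℝ (fun i => fderiv ℝ (φ i) (f x₀, f x₀)))
    (hconormal : ∀ i, ∀ v : Y, fderiv ℝ (φ i) (f x₀, f x₀) (v, v) = 0) :
    LinearIndependent ℝ
      (fun i => fderiv ℝ ((φ i) ∘ (fun p : Y × X => (p.1, f p.2))) (f x₀, x₀)) :=
  stmt16_general f x₀ hf φ hindep hconormal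
end
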